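/- arXiv:2508.08494 — 4 statements merged into one kernel-verified Lean document; each statement's English description precedes it below -/
import Mathlib

section
/- Let N be a natural number, v ∈ ℂ^{N+1}, and μ ∈ ℂ, and set y = f(v; z) = ∑_{k=0}^N v_k z^{N−k}. Then J_N v = μ v if and only if the identity of polynomials μ·y = z²(1−z)²·y''' + 3z(1−z)((N−1)z − N)·y'' + N((2N−5)z² + (2−5N)z + 2N+1)·y' + N((2N+1)z + N² + N + 1)·y holds, where y', y'', y''' denote formal derivatives of the polynomial y. -/
open Polynomial

noncomputable section

/-- Off-diagonal entry `a(n) = (N+1)²n - n³` of the Jacobi matrix `J_N`. -/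
def aEnt (N n : ℕ) : ℂ := ((N : ℂ) + 1) ^ 2 * (n : ℂ) - (n : ℂ) ^ 3

/-- Diagonal entry `b(n) = 2n³ + 3n² + 2n - (N+1)²n` of the Jacobi matrix `J_N`. -/
def bEnt (N n : ℕ) : ℂ :=
  2 * (n : ℂ) ^ 3 + 3 * (n : ℂ) ^ 2 + 2 * (n : ℂ) - ((N : ℂ) + 1) ^ 2 * (n : ℂ)

/-- The `(N+1) × (N+1)` tridiagonal matrix `J_N`, with `(J_N)_{n,n} = b(n)` and
`(J_N)_{n,n-1} = (J_N)_{n-1,n} = a(n)`. -/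
def jacobiMatrix (N : ℕ) : Matrix (Fin (N + 1)) (Fin (N + 1)) ℂ :=
  fun m n =>
    if (m : ℕ) = (n : ℕ) then bEnt N (m : ℕ)
    else if (m : ℕ) + 1 = (n : ℕ) then aEnt N (n : ℕ)
    else if (n : ℕ) + 1 = (m : ℕ) then aEnt N (m : ℕ)
    else 0

/-- The generating polynomial `f(v; z) = ∑_{k=0}^N v_k z^{N-k}`. -/
def genPoly {N : ℕ} (v : Fin (N + 1) → ℂ) : ℂ[X] :=
  ∑ k : Fin (N + 1), C (v k) * X ^ (N - (k : ℕ))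

/-- The differential operator appearing on the right-hand side. -/
def Lop (N : ℕ) (p : ℂ[X]) : ℂ[X] :=
  X ^ 2 * (1 - X) ^ 2 * derivative (derivative (derivative p))
  + 3 * X * (1 - X) * (C ((N : ℂ) - 1) * X - C (N : ℂ)) * derivative (derivative p)
  + C (N : ℂ) * (C (2 * (N : ℂ) - 5) * X ^ 2 + C (2 - 5 * (N : ℂ)) * X
      + C (2 * (N : ℂ) + 1)) * derivative p
  + C (N : ℂ) * (C (2 * (N : ℂ) + 1) * X + C ((N : ℂ) ^ 2 + (N : ℂ) + 1)) * p

lemma Lop_sum {ι : Type*} (N : ℕ) (s : Finset ι) (f : ι → ℂ[X]) :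
    Lop N (∑ i ∈ s, f i) = ∑ i ∈ s, Lop N (f i) := by
  simp [Lop, derivative_sum, Finset.mul_sum, Finset.sum_add_distrib]

lemma Lop_C_mul (N : ℕ) (c : ℂ) (p : ℂ[X]) : Lop N (C c * p) = C c * Lop N p := by
  simp only [Lop, derivative_C_mul]; ring

lemma aEnt_zero (N : ℕ) : aEnt N 0 = 0 := by simp [aEnt]

lemma aEnt_top (N : ℕ) : aEnt N (N + 1) = 0 := by push_cast [aEnt]; ring

lemma keyL (N m j : ℕ) (h : m + j = N) :
    Lop N (X ^ m) =
      C (aEnt N j) * X ^ (m + 1) + C (bEnt N j) * X ^ m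
        + C (aEnt N (j + 1)) * X ^ (m - 1) := by
  subst h
  match m with
  | 0 =>
    simp only [Lop, aEnt, bEnt, pow_zero, derivative_one, derivative_zero]
    push_cast
    simp only [map_sub, map_add, map_mul, map_pow, map_one, map_ofNat, map_zero, C_0, C_1,
      C_eq_natCast]
    ring
  | 1 =>
    simp only [Lop, aEnt, bEnt, pow_one, derivative_X, derivative_one, derivative_zero]
    push_cast
    simp only [map_sub, map_add, map_mul, map_pow, map_one, map_ofNat, map_zero, C_0, C_1,
      C_eq_natCast]
    ring
  | 2 =>
    simp only [Lop, aEnt, bEnt, derivative_X_pow, derivative_C_mul, derivative_X,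
      derivative_one, derivative_zero]
    norm_num
    simp only [map_sub, map_add, map_mul, map_pow, map_one, map_ofNat, map_zero, C_0, C_1,
      C_eq_natCast]
    ring
  | (k + 3) =>
    simp only [Lop, aEnt, bEnt, derivative_X_pow, derivative_C_mul,
      Nat.add_sub_cancel, show k + 3 - 1 = k + 2 from rfl, show k + 2 - 1 = k + 1 from rfl,
      show k + 1 - 1 = k from rfl]
    push_cast
    simp only [map_sub, map_add, map_mul, map_pow, map_one, map_ofNat, map_zero, C_0, C_1,
      C_eq_natCast]
    ring

lemma col_sum (N : ℕ) (j : Fin (N + 1)) :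
    ∑ n : Fin (N + 1), C (jacobiMatrix N n j) * X ^ (N - (n : ℕ)) =
      C (aEnt N j) * X ^ (N - (j : ℕ) + 1) + C (bEnt N j) * X ^ (N - (j : ℕ))
        + C (aEnt N ((j : ℕ) + 1)) * X ^ (N - (j : ℕ) - 1) := by
  have hj := j.isLt
  have split : ∀ n : Fin (N + 1),
      C (jacobiMatrix N n j) * X ^ (N - (n : ℕ)) =
        (if (n : ℕ) + 1 = (j : ℕ) then C (aEnt N j) * X ^ (N - (j : ℕ) + 1) else 0)
        + (if (n : ℕ) = (j : ℕ) then C (bEnt N j) * X ^ (N - (j : ℕ)) else 0)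
        + (if (j : ℕ) + 1 = (n : ℕ) then C (aEnt N ((j : ℕ) + 1)) * X ^ (N - (j : ℕ) - 1)
            else 0) := by
    intro n
    have hn := n.isLt
    unfold jacobiMatrix
    split_ifs with h1 h2 h3 h4 h5 h6 h7
    all_goals first
      | omega
      | (rw [h1]; ring)
      | (rw [show N - (n : ℕ) = N - (j : ℕ) + 1 by omega]; ring)
      | (rw [show N - (n : ℕ) = N - (j : ℕ) - 1 by omega,
             show (n : ℕ) = (j : ℕ) + 1 by omega]; ring)
      | simp
  rw [Finset.sum_congr rfl (fun n _ => split n)]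
  rw [Finset.sum_add_distrib, Finset.sum_add_distrib]
  congr 1
  · congr 1
    · rcases Nat.eq_zero_or_pos (j : ℕ) with h0 | hpos
      · rw [Finset.sum_eq_zero (by intro n _; rw [if_neg (by omega)])]
        have : aEnt N (j : ℕ) = 0 := by rw [h0]; exact aEnt_zero N
        simp [this]
      · rw [Finset.sum_eq_single (⟨(j : ℕ) - 1, by omega⟩ : Fin (N + 1))]
        · rw [if_pos (by simp; omega)]
        · intro b _ hb
          rw [if_neg (by simpa [Fin.ext_iff] using fun h => hb (by simp [Fin.ext_iff]; omega))]
        · simp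
    · rw [Finset.sum_eq_single j]
      · simp
      · intro b _ hb; rw [if_neg (by simpa [Fin.ext_iff] using hb)]
      · simp
  · rcases Nat.lt_or_ge (j : ℕ) N with hlt | hge
    · rw [Finset.sum_eq_single (⟨(j : ℕ) + 1, by omega⟩ : Fin (N + 1))]
      · rw [if_pos (by simp)]
      · intro b _ hb
        rw [if_neg (by simpa [Fin.ext_iff] using fun h => hb (by simp [Fin.ext_iff]; omega))]
      · simp
    · have hjN : (j : ℕ) = N := by omega
      rw [Finset.sum_eq_zero (by intro n _; rw [if_neg (by have := n.isLt; omega)])]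
      rw [hjN, aEnt_top]
      simp

lemma genPoly_coeff {N : ℕ} (v : Fin (N + 1) → ℂ) (k : Fin (N + 1)) :
    (genPoly v).coeff (N - (k : ℕ)) = v k := by
  unfold genPoly
  rw [finset_sum_coeff, Finset.sum_eq_single k]
  · simp [coeff_C_mul, coeff_X_pow]
  · intro b _ hb
    have hb' : (b : ℕ) ≠ (k : ℕ) := fun h => hb (Fin.ext h)
    have h1 := b.isLt; have h2 := k.isLt
    simp [coeff_C_mul, coeff_X_pow, show ¬(N - (k : ℕ) = N - (b : ℕ)) by omega]
  · simp

lemma genPoly_injective {N : ℕ} : Function.Injective (genPoly (N := N)) := by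
  intro u w h
  funext k
  rw [← genPoly_coeff u k, ← genPoly_coeff w k, h]

lemma genPoly_smul {N : ℕ} (μ : ℂ) (v : Fin (N + 1) → ℂ) :
    genPoly (μ • v) = C μ * genPoly v := by
  simp [genPoly, Finset.mul_sum, mul_assoc]

lemma hmain {N : ℕ} (v : Fin (N + 1) → ℂ) :
    Lop N (genPoly v) = genPoly ((jacobiMatrix N).mulVec v) := by
  have lhs : Lop N (genPoly v) = ∑ j : Fin (N + 1), C (v j) *
      (C (aEnt N j) * X ^ (N - (j : ℕ) + 1) + C (bEnt N j) * X ^ (N - (j : ℕ))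
        + C (aEnt N ((j : ℕ) + 1)) * X ^ (N - (j : ℕ) - 1)) := by
    unfold genPoly
    rw [Lop_sum]
    refine Finset.sum_congr rfl fun j _ => ?_
    have hj := j.isLt
    rw [Lop_C_mul, keyL N (N - (j : ℕ)) (j : ℕ) (by omega)]
  have rhs : genPoly ((jacobiMatrix N).mulVec v) = ∑ j : Fin (N + 1), C (v j) *
      (C (aEnt N j) * X ^ (N - (j : ℕ) + 1) + C (bEnt N j) * X ^ (N - (j : ℕ))
        + C (aEnt N ((j : ℕ) + 1)) * X ^ (N - (j : ℕ) - 1)) := by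
    unfold genPoly
    simp only [Matrix.mulVec, dotProduct, map_sum, map_mul, Finset.sum_mul]
    rw [Finset.sum_comm]
    refine Finset.sum_congr rfl fun j _ => ?_
    rw [← col_sum N j, Finset.mul_sum]
    refine Finset.sum_congr rfl fun n _ => ?_
    ring
  rw [lhs, rhs]

theorem stmt4 (N : ℕ) (v : Fin (N + 1) → ℂ) (μ : ℂ) :
    (jacobiMatrix N).mulVec v = μ • v ↔
      C μ * genPoly v =
        X ^ 2 * (1 - X) ^ 2 * derivative (derivative (derivative (genPoly v)))
        + 3 * X * (1 - X) * (C ((N : ℂ) - 1) * X - C (N : ℂ)) *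
            derivative (derivative (genPoly v))
        + C (N : ℂ) * (C (2 * (N : ℂ) - 5) * X ^ 2 + C (2 - 5 * (N : ℂ)) * X
            + C (2 * (N : ℂ) + 1)) * derivative (genPoly v)
        + C (N : ℂ) * (C (2 * (N : ℂ) + 1) * X + C ((N : ℂ) ^ 2 + (N : ℂ) + 1)) *
            genPoly v := by
  constructor
  · intro h
    have h' := congrArg genPoly h
    rw [genPoly_smul, ← hmain v] at h'
    exact (show C μ * genPoly v = Lop N (genPoly v) from h'.symm)
  · intro h
    apply genPoly_injective
    rw [genPoly_smul, ← hmain v]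
    exact (show Lop N (genPoly v) = C μ * genPoly v from h.symm)
end
end

section
/- Let N be a positive even integer and μ = (N² + 2N)/2, and set ỹ = P_N(z)·Q_N(z) ∈ ℚ[z]. Then the identity of polynomials μ·ỹ = z²(1−z)²·ỹ''' + 3z(1−z)((N−1)z − N)·ỹ'' + N((2N−5)z² + (2−5N)z + 2N+1)·ỹ' + N((2N+1)z + N² + N + 1)·ỹ holds, where derivatives are formal derivatives of polynomials. -/
open Polynomial Finset

noncomputable section

/-- The rising Pochhammer symbol `(q)_k = q(q+1)⋯(q+k-1)` over `ℚ`. -/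
def poch (q : ℚ) (k : ℕ) : ℚ := (ascPochhammer ℚ k).eval q

/-- Coefficient of `z^k` in `P_N(z) = ₂F₁(-N/2, N/2+1; -N; z)`. -/
def Pcoef (N k : ℕ) : ℚ :=
  poch (-(N : ℚ) / 2) k * poch ((N : ℚ) / 2 + 1) k /
    (poch (-(N : ℚ)) k * (Nat.factorial k : ℚ))

/-- Coefficient of `z^k` in `Q_N(z) = ₂F₁(-N/2, -3N/2-1; -N; z)`. -/
def Qcoef (N k : ℕ) : ℚ :=
  poch (-(N : ℚ) / 2) k * poch (-(3 * (N : ℚ)) / 2 - 1) k /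
    (poch (-(N : ℚ)) k * (Nat.factorial k : ℚ))

/-- The polynomial `P_N(z)`. -/
def Ppoly (N : ℕ) : ℚ[X] := ∑ k ∈ Finset.range (N / 2 + 1), C (Pcoef N k) * X ^ k

/-- The polynomial `Q_N(z)`. -/
def Qpoly (N : ℕ) : ℚ[X] := ∑ k ∈ Finset.range (N / 2 + 1), C (Qcoef N k) * X ^ k

lemma poch_succ (q : ℚ) (k : ℕ) : poch q (k+1) = poch q k * (q + k) := by
  simp [poch, ascPochhammer_succ_right]

lemma poch_ne_zero {q : ℚ} {k : ℕ} (h : ∀ j : ℕ, j < k → q + j ≠ 0) : poch q k ≠ 0 := by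
  induction k with
  | zero => simp [poch]
  | succ k ih =>
    rw [poch_succ]
    exact mul_ne_zero (ih fun j hj => h j (by omega)) (h k (by omega))

lemma coeff_sum_C_X (n : ℕ) (c : ℕ → ℚ) (m : ℕ) :
    (∑ k ∈ Finset.range (n+1), C (c k) * X ^ k).coeff m = if m ≤ n then c m else 0 := by
  rw [finset_sum_coeff]
  simp only [coeff_C_mul, coeff_X_pow, mul_ite, mul_one, mul_zero]
  rw [Finset.sum_ite_eq (Finset.range (n+1)) m c]
  simp [Nat.lt_succ_iff]

set_option linter.unreachableTactic false in
set_option linter.unusedTactic false in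
lemma ode_generic (n : ℕ) (c : ℕ → ℚ) (α β γ : ℚ)
    (hrec : ∀ k : ℕ, ((k:ℚ)+1)*((k:ℚ)+α) * (if k+1 ≤ n then c (k+1) else 0)
        + (γ + (k:ℚ)*(β - (k:ℚ) + 1)) * (if k ≤ n then c k else 0) = 0) :
    derivative (derivative (∑ k ∈ Finset.range (n+1), C (c k) * X ^ k)) * X
      - derivative (derivative (∑ k ∈ Finset.range (n+1), C (c k) * X ^ k)) * X^2
      + C α * derivative (∑ k ∈ Finset.range (n+1), C (c k) * X ^ k)
      + C β * (derivative (∑ k ∈ Finset.range (n+1), C (c k) * X ^ k) * X)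
      + C γ * (∑ k ∈ Finset.range (n+1), C (c k) * X ^ k) = 0 := by
  set P := ∑ k ∈ Finset.range (n+1), C (c k) * X ^ k with hP
  have hc : ∀ j, P.coeff j = if j ≤ n then c j else 0 := coeff_sum_C_X n c
  apply Polynomial.ext
  intro m
  match m with
  | 0 =>
    have h := hrec 0
    simp only [coeff_add, coeff_sub, sq, ← mul_assoc, coeff_mul_X_zero, coeff_C_mul,
      coeff_derivative, coeff_zero, hc]
    norm_num at h ⊢
    split_ifs at h ⊢ <;> first | linear_combination h | omega | ring
  | 1 =>
    have h := hrec 1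
    simp only [coeff_add, coeff_sub, sq, ← mul_assoc, coeff_mul_X, coeff_mul_X_zero, coeff_C_mul,
      coeff_derivative, coeff_zero, hc]
    norm_num at h ⊢
    split_ifs at h ⊢ <;> first | linear_combination h | omega | ring
  | (m+2) =>
    have h := hrec (m+2)
    simp only [coeff_add, coeff_sub, sq, ← mul_assoc, coeff_mul_X, coeff_C_mul,
      coeff_derivative, coeff_zero, hc]
    push_cast at h ⊢
    split_ifs at h ⊢ <;> first | linear_combination h | omega | ring

lemma Pcoef_rec (N n : ℕ) (h2 : N = 2*n) (hn : 0 < n) (k : ℕ) :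
    ((k:ℚ)+1)*((k:ℚ) + (-(N:ℚ))) * (if k+1 ≤ n then Pcoef N (k+1) else 0)
      + ((((N:ℚ))^2 + 2*(N:ℚ))/4 + (k:ℚ)*((-2:ℚ) - (k:ℚ) + 1)) *
        (if k ≤ n then Pcoef N k else 0) = 0 := by
  have hNq : (N:ℚ) = 2*(n:ℚ) := by rw [h2]; push_cast; ring
  have hf : (Nat.factorial k : ℚ) ≠ 0 := Nat.cast_ne_zero.mpr k.factorial_ne_zero
  rcases lt_trichotomy k n with hk | hk | hk
  · rw [if_pos (by omega), if_pos (by omega)]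
    have hcast : ∀ j : ℕ, j < N → -(N:ℚ) + (j:ℚ) ≠ 0 := by
      intro j hj hc
      have : (j:ℚ) = (N:ℚ) := by linarith
      exact absurd (Nat.cast_injective this) (by omega)
    have hcc : poch (-(N:ℚ)) k ≠ 0 := poch_ne_zero (fun j hj => hcast j (by omega))
    have hcck : -(N:ℚ) + (k:ℚ) ≠ 0 := hcast k (by omega)
    have hk1 : (k:ℚ) + 1 ≠ 0 := by positivity
    simp only [Pcoef, poch_succ, Nat.factorial_succ]
    push_cast
    field_simp
    ring
  · subst hk
    rw [if_neg (by omega), if_pos le_rfl, hNq]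
    ring
  · rw [if_neg (by omega), if_neg (by omega)]
    ring

lemma Qcoef_rec (N n : ℕ) (h2 : N = 2*n) (hn : 0 < n) (k : ℕ) :
    ((k:ℚ)+1)*((k:ℚ) + (-(N:ℚ))) * (if k+1 ≤ n then Qcoef N (k+1) else 0)
      + ((-(3*((N:ℚ))^2 + 2*(N:ℚ))/4) + (k:ℚ)*(2*(N:ℚ) - (k:ℚ) + 1)) *
        (if k ≤ n then Qcoef N k else 0) = 0 := by
  have hNq : (N:ℚ) = 2*(n:ℚ) := by rw [h2]; push_cast; ring
  have hf : (Nat.factorial k : ℚ) ≠ 0 := Nat.cast_ne_zero.mpr k.factorial_ne_zero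
  rcases lt_trichotomy k n with hk | hk | hk
  · rw [if_pos (by omega), if_pos (by omega)]
    have hcast : ∀ j : ℕ, j < N → -(N:ℚ) + (j:ℚ) ≠ 0 := by
      intro j hj hc
      have : (j:ℚ) = (N:ℚ) := by linarith
      exact absurd (Nat.cast_injective this) (by omega)
    have hcc : poch (-(N:ℚ)) k ≠ 0 := poch_ne_zero (fun j hj => hcast j (by omega))
    have hcck : -(N:ℚ) + (k:ℚ) ≠ 0 := hcast k (by omega)
    have hk1 : (k:ℚ) + 1 ≠ 0 := by positivity
    simp only [Qcoef, poch_succ, Nat.factorial_succ]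
    push_cast
    field_simp
    ring
  · subst hk
    rw [if_neg (by omega), if_pos le_rfl, hNq]
    ring
  · rw [if_neg (by omega), if_neg (by omega)]
    ring

theorem stmt13 (N : ℕ) (hN : 0 < N) (heven : Even N) :
    C (((N : ℚ) ^ 2 + 2 * N) / 2) * (Ppoly N * Qpoly N) =
      X ^ 2 * (1 - X) ^ 2 * derivative (derivative (derivative (Ppoly N * Qpoly N)))
      + 3 * X * (1 - X) * (C ((N : ℚ) - 1) * X - C (N : ℚ)) *
          derivative (derivative (Ppoly N * Qpoly N))
      + C (N : ℚ) * (C (2 * (N : ℚ) - 5) * X ^ 2 + C (2 - 5 * (N : ℚ)) * X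
          + C (2 * (N : ℚ) + 1)) * derivative (Ppoly N * Qpoly N)
      + C (N : ℚ) * (C (2 * (N : ℚ) + 1) * X + C ((N : ℚ) ^ 2 + (N : ℚ) + 1)) *
          (Ppoly N * Qpoly N) := by
  obtain ⟨n, hnn⟩ := heven
  have h2 : N = 2 * n := by omega
  have hn : 0 < n := by omega
  have hdiv : N / 2 = n := by omega
  have hPeq : Ppoly N = ∑ k ∈ Finset.range (n+1), C (Pcoef N k) * X ^ k := by
    rw [Ppoly, hdiv]
  have hQeq : Qpoly N = ∑ k ∈ Finset.range (n+1), C (Qcoef N k) * X ^ k := by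
    rw [Qpoly, hdiv]
  have h1 := ode_generic n (Pcoef N) (-(N:ℚ)) (-2) ((((N:ℚ))^2 + 2*(N:ℚ))/4)
      (Pcoef_rec N n h2 hn)
  have h2' := ode_generic n (Qcoef N) (-(N:ℚ)) (2*(N:ℚ)) (-(3*((N:ℚ))^2 + 2*(N:ℚ))/4)
      (Qcoef_rec N n h2 hn)
  rw [← hPeq] at h1
  rw [← hQeq] at h2'
  have h1d := congrArg derivative h1
  have h2d := congrArg derivative h2'
  simp only [derivative_add, derivative_sub, derivative_mul, derivative_C, derivative_X,
    derivative_X_pow, derivative_zero] at h1d h2d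
  simp only [derivative_mul, derivative_add]
  apply Polynomial.funext
  intro x
  have e1 := congrArg (eval x) h1
  have e2 := congrArg (eval x) h2'
  have e1d := congrArg (eval x) h1d
  have e2d := congrArg (eval x) h2d
  simp only [eval_add, eval_sub, eval_mul, eval_pow, eval_C, eval_X, eval_zero, eval_one,
    eval_ofNat, eval_neg, eval_natCast] at e1 e2 e1d e2d ⊢
  linear_combination
    (-(x*(1-x) * eval x (Qpoly N))) * e1d
    + (-(3*x*(1-x)*eval x (derivative (Qpoly N))
        + (3*(N:ℚ)*x + x - 2*(N:ℚ) - 1) * eval x (Qpoly N))) * e1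
    + (-(x*(1-x) * eval x (Ppoly N))) * e2d
    + (-(3*x*(1-x)*eval x (derivative (Ppoly N))
        + ((N:ℚ)*x - x - 2*(N:ℚ) - 1) * eval x (Ppoly N))) * e2
end
end

section
/- Let N be a positive even integer. Then for every z ∈ ℂ with z ≠ 1, P_N(z/(z−1)) · (1−z)^{N/2} = Q_N(z). (This is the Pfaff transformation ₂F₁(−N/2, N/2+1; −N; z/(z−1))(1−z)^{N/2} = ₂F₁(−N/2, −3N/2−1; −N; z) for these terminating hypergeometric polynomials.) -/
open Polynomial Finset

/-!
With `w = z / (z - 1)` one has `w ^ k * (1 - z) ^ n = (-z) ^ k * (1 - z) ^ (n - k)`, so expanding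
`(1 - z) ^ (n - k)` binomially turns the terminating Pfaff transformation
`₂F₁(-n, c - b; c; w) (1 - z) ^ n = ₂F₁(-n, b; c; z)` into the coefficient identity
`(-n)_m (b)_m / ((c)_m m!) = (-1) ^ m ∑ₖ (-n)_k (c - b)_k / ((c)_k k!) * C(n - k, m - k)`.
Since `(-n)_k = (-1) ^ k k! C(n, k)` and `C(n, k) C(n - k, m - k) = C(n, m) C(m, k)`, this is the
Chu–Vandermonde identity `(b)_m = ∑ₖ (-1) ^ k C(m, k) (c - b)_k (c + k)_(m - k)`.
For `N = 2n`, `P_N` and `Q_N` are the cases `c = -2n`, `b = -3n - 1`, and `(-2n)_n ≠ 0`.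
-/

theorem ascPochhammer_eval_add_nat {R : Type*} [CommSemiring R] (c : R) (k l : ℕ) :
    (ascPochhammer R (k + l)).eval c =
      (ascPochhammer R k).eval c * (ascPochhammer R l).eval (c + k) := by
  rw [← ascPochhammer_mul, eval_mul, eval_comp, eval_add, eval_X, eval_natCast]

theorem ascPochhammer_eval_neg_natCast {R : Type*} [CommRing R] (n k : ℕ) :
    (ascPochhammer R k).eval (-(n : R)) = (-1) ^ k * k.factorial * n.choose k := by
  rw [ascPochhammer_eval_neg_eq_descPochhammer, descPochhammer_eval_eq_descFactorial,
    Nat.descFactorial_eq_factorial_mul_choose, Nat.cast_mul, mul_assoc]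

-- `Ring.descPochhammer_smeval_add` at `r = b - c`, `s = c + m - 1`, in rising factorials.
theorem ascPochhammer_eval_eq_sum_choose {R : Type*} [CommRing R] (b c : R) (m : ℕ) :
    (ascPochhammer R m).eval b = ∑ k ∈ range (m + 1),
      (-1) ^ k * m.choose k * (ascPochhammer R k).eval (c - b) *
        (ascPochhammer R (m - k)).eval (c + k) := by
  have desc_eval (r : R) (i : ℕ) :
      (descPochhammer ℤ i).smeval r = (ascPochhammer R i).eval (r - i + 1) := by
    rw [descPochhammer_smeval_eq_ascPochhammer, ascPochhammer_smeval_eq_eval]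
  have chu_vandermonde := Ring.descPochhammer_smeval_add m (Commute.all (b - c) (c + m - 1))
  rw [Nat.sum_antidiagonal_eq_sum_range_succ
    (fun i j => (m.choose i : R) * ((descPochhammer ℤ i).smeval (b - c) *
      (descPochhammer ℤ j).smeval (c + m - 1))), desc_eval,
    show b - c + (c + m - 1) - m + 1 = b by ring] at chu_vandermonde
  rw [chu_vandermonde]
  refine sum_congr rfl fun k hk => ?_
  have reflect : (ascPochhammer R k).eval (c - b) =
      (-1) ^ k * (ascPochhammer R k).eval (b - c - k + 1) := by
    rw [← descPochhammer_eval_eq_ascPochhammer, ← ascPochhammer_eval_neg_eq_descPochhammer, neg_sub]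
  rw [desc_eval, desc_eval, Nat.cast_sub (mem_range_succ_iff.mp hk),
    show c + m - 1 - (m - k : R) + 1 = c + k by ring, reflect]
  have sign : (-1 : R) ^ k * (-1) ^ k = 1 := by rw [← mul_pow, neg_one_mul, neg_neg, one_pow]
  linear_combination (-(m.choose k : R) * (ascPochhammer R k).eval (b - c - k + 1) *
    (ascPochhammer R (m - k)).eval (c + k)) * sign

theorem ordinaryHypergeometricCoefficient_neg_natCast {K : Type*} [Field K] [CharZero K]
    (n : ℕ) (b c : K) (k : ℕ) :
    ordinaryHypergeometricCoefficient (-(n : K)) b c k =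
      (-1) ^ k * n.choose k * (ascPochhammer K k).eval b / (ascPochhammer K k).eval c := by
  have hk : (k.factorial : K) ≠ 0 := by exact_mod_cast k.factorial_ne_zero
  rw [ordinaryHypergeometricCoefficient, ascPochhammer_eval_neg_natCast]
  field_simp

theorem ordinaryHypergeometricCoefficient_neg_natCast_eq_sum {K : Type*} [Field K] [CharZero K]
    (n m : ℕ) (b c : K) (hc : (ascPochhammer K m).eval c ≠ 0) :
    ordinaryHypergeometricCoefficient (-(n : K)) b c m = (-1) ^ m * ∑ k ∈ range (m + 1),
      ordinaryHypergeometricCoefficient (-(n : K)) (c - b) c k * (n - k).choose (m - k) := by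
  have term : ∀ k ∈ range (m + 1),
      ordinaryHypergeometricCoefficient (-(n : K)) (c - b) c k * (n - k).choose (m - k) =
        n.choose m / (ascPochhammer K m).eval c * ((-1) ^ k * m.choose k *
          (ascPochhammer K k).eval (c - b) * (ascPochhammer K (m - k)).eval (c + k)) := by
    intro k hk
    have hkm : k ≤ m := mem_range_succ_iff.mp hk
    have split := ascPochhammer_eval_add_nat c k (m - k)
    rw [Nat.add_sub_cancel' hkm] at split
    have hck : (ascPochhammer K k).eval c ≠ 0 := left_ne_zero_of_mul (split ▸ hc)
    have hck' : (ascPochhammer K (m - k)).eval (c + k) ≠ 0 := right_ne_zero_of_mul (split ▸ hc)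
    have choose_mul : (n.choose m * m.choose k : K) = n.choose k * (n - k).choose (m - k) := by
      exact_mod_cast Nat.choose_mul hkm
    rw [ordinaryHypergeometricCoefficient_neg_natCast, split]
    field_simp
    linear_combination -(ascPochhammer K k).eval (c - b) * choose_mul
  rw [ordinaryHypergeometricCoefficient_neg_natCast, sum_congr rfl term, ← mul_sum,
    ← ascPochhammer_eval_eq_sum_choose]
  ring

theorem sum_mul_pow_mul_one_add_pow {R : Type*} [CommSemiring R] (p : ℕ → R) (n : ℕ) (y : R) :
    ∑ k ∈ range (n + 1), p k * y ^ k * (1 + y) ^ (n - k) =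
      ∑ m ∈ range (n + 1), (∑ k ∈ range (m + 1), p k * (n - k).choose (m - k)) * y ^ m := by
  simp_rw [sum_mul]
  rw [sum_congr rfl fun m _ => sum_congr rfl fun k hk => show
      p k * (n - k).choose (m - k) * y ^ m = p k * (n - k).choose (m - k) * y ^ (k + (m - k)) by
    rw [Nat.add_sub_cancel' (mem_range_succ_iff.mp hk)],
    sum_range_diag_flip (n + 1) fun k j => p k * (n - k).choose j * y ^ (k + j)]
  refine sum_congr rfl fun k hk => ?_
  rw [add_comm 1 y, add_pow, mul_sum, Nat.sub_add_comm (mem_range_succ_iff.mp hk)]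
  refine sum_congr rfl fun j _ => ?_
  rw [one_pow, pow_add]
  ring

theorem div_sub_one_pow_mul_one_sub_pow {L : Type*} [Field L] {z : L} (hz : z ≠ 1) {k n : ℕ}
    (hkn : k ≤ n) : (z / (z - 1)) ^ k * (1 - z) ^ n = (-z) ^ k * (1 - z) ^ (n - k) := by
  have hz' : z - 1 ≠ 0 := sub_ne_zero.mpr hz
  rw [← Nat.add_sub_cancel' hkn, pow_add, Nat.add_sub_cancel_left, ← mul_assoc, ← mul_pow,
    div_mul_eq_mul_div, mul_div_assoc, show 1 - z = -(z - 1) by ring, neg_div_self hz', mul_neg_one]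

theorem sum_ordinaryHypergeometricCoefficient_pfaff {K L : Type*} [Field K] [CharZero K] [Field L]
    [Algebra K L] (n : ℕ) (b c : K) (hc : (ascPochhammer K n).eval c ≠ 0) {z : L} (hz : z ≠ 1) :
    (∑ k ∈ range (n + 1),
        algebraMap K L (ordinaryHypergeometricCoefficient (-(n : K)) (c - b) c k) *
          (z / (z - 1)) ^ k) * (1 - z) ^ n =
      ∑ m ∈ range (n + 1),
        algebraMap K L (ordinaryHypergeometricCoefficient (-(n : K)) b c m) * z ^ m := by
  rw [sum_mul, sum_congr rfl fun k hk => by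
    rw [mul_assoc, div_sub_one_pow_mul_one_sub_pow hz (mem_range_succ_iff.mp hk),
      ← mul_assoc, sub_eq_add_neg (1 : L) z],
    sum_mul_pow_mul_one_add_pow]
  refine sum_congr rfl fun m hm => ?_
  obtain ⟨l, rfl⟩ := Nat.exists_eq_add_of_le (mem_range_succ_iff.mp hm)
  have hcm : (ascPochhammer K m).eval c ≠ 0 :=
    left_ne_zero_of_mul (ascPochhammer_eval_add_nat c m l ▸ hc)
  rw [ordinaryHypergeometricCoefficient_neg_natCast_eq_sum _ m b c hcm, neg_pow, map_mul, map_pow,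
    map_neg, map_one, map_sum]
  simp only [map_mul, map_natCast]
  ring

theorem Pcoef_two_mul (n k : ℕ) :
    Pcoef (2 * n) k = ordinaryHypergeometricCoefficient (-(n : ℚ)) (n + 1) (-(2 * n)) k := by
  simp only [Pcoef, poch, ordinaryHypergeometricCoefficient, Nat.cast_mul, Nat.cast_ofNat,
    show -(2 * n : ℚ) / 2 = -n by ring, mul_div_cancel_left₀ (n : ℚ) two_ne_zero]
  ring

theorem Qcoef_two_mul (n k : ℕ) :
    Qcoef (2 * n) k =
      ordinaryHypergeometricCoefficient (-(n : ℚ)) (-(3 * n) - 1) (-(2 * n)) k := by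
  simp only [Qcoef, poch, ordinaryHypergeometricCoefficient, Nat.cast_mul, Nat.cast_ofNat,
    show -(2 * n : ℚ) / 2 = -n by ring, show -(3 * (2 * n) : ℚ) / 2 - 1 = -(3 * n) - 1 by ring]
  ring

theorem stmt15_general (N : ℕ) (heven : Even N) (z : ℂ) (hz : z ≠ 1) :
    Polynomial.aeval (z / (z - 1)) (Ppoly N) * (1 - z) ^ (N / 2) =
      Polynomial.aeval z (Qpoly N) := by
  obtain ⟨n, rfl⟩ := heven
  have hc : (ascPochhammer ℚ n).eval (-(2 * n : ℚ)) ≠ 0 := by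
    rw [show -(2 * n : ℚ) = -((2 * n : ℕ) : ℚ) by push_cast; ring, ascPochhammer_eval_neg_natCast]
    have := (Nat.choose_pos (show n ≤ 2 * n by omega)).ne'
    simp [Nat.factorial_ne_zero, this]
  have pfaff := sum_ordinaryHypergeometricCoefficient_pfaff n (-(3 * n) - 1 : ℚ) _ hc hz
  rw [show -(2 * n : ℚ) - (-(3 * n) - 1) = n + 1 by ring] at pfaff
  rw [← two_mul]
  simpa only [Ppoly, Qpoly, Nat.mul_div_cancel_left n two_pos, map_sum, map_mul, aeval_C,
    aeval_X_pow, Pcoef_two_mul, Qcoef_two_mul] using pfaff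

theorem stmt15 (N : ℕ) (hN : 0 < N) (heven : Even N) (z : ℂ) (hz : z ≠ 1) :
    Polynomial.aeval (z / (z - 1)) (Ppoly N) * (1 - z) ^ (N / 2) =
      Polynomial.aeval z (Qpoly N) :=
  stmt15_general N heven z hz
end

section
/- Let p be an odd prime. For each n ≥ 1 set N_n = p^n − 1 and U_n(z) = P_{N_n}(z)·Q_{N_n}(z) ∈ ℚ[z], and let F(z) = ∑_{k=0}^∞ (binomial(2k, k)/4^k)² z^k = ₂F₁(1/2, 1/2; 1; z), a series which converges in ℚ_p whenever |z|_p < 1. Then for every z ∈ ℚ_p with |z|_p < 1 and every n ≥ 1, |U_n(z) − F(z)²|_p ≤ p^{−n}; in particular, U_n(z) converges p-adically to F(z)² as n → ∞. -/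
open Polynomial Finset

noncomputable section

/-- The `p`-adic hypergeometric series `F(z) = ₂F₁(1/2, 1/2; 1; z)
= ∑ (binom(2k,k)/4^k)² z^k`, for `z` in the open `p`-adic unit disk. -/
def Fpadic (p : ℕ) [Fact p.Prime] (z : ℚ_[p]) : ℚ_[p] :=
  ∑' k : ℕ, (((2 * k).choose k : ℚ_[p]) / 4 ^ k) ^ 2 * z ^ k

/-!
Write `p ^ n = 2M + 1`, so `N = 2M`. The `k`-th coefficients of `P_N` and `Q_N` are
`(a)_k (s)_k / ((-N)_k k!)` with `2a - 1 = -p^n` and `2s - 1 = p^n` resp. `-3p^n`, whereas that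
of `F` is `((1/2)_k / k!)^2`. Their quotient is a product over `i < k` of the factors
`(a + i)/(1/2 + i) = 1 + (2a - 1)/(2i + 1)`, the same with `s`, and
`(1 + i)/(-N + i) = 1 + p^n/(i + 1 - p^n)`, where `‖i + 1 - p^n‖ = ‖i + 1‖`. Since
`‖1/m‖ ≤ m` for a positive integer `m`, every factor, hence the quotient, is within
`p^{-n} · 2k` of `1`. For `‖z‖ < 1` we have `‖z^k‖ ≤ p^{-k}`, which absorbs the factor `2k`, so
`P_N(z)` and `Q_N(z)` agree with the partial sum of `F(z)` up to `p^{-n}`; the tail of `F(z)`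
beyond degree `M ≥ n - 1` is also that small. As everything lies in the closed unit ball,
`‖P Q - F²‖ ≤ max ‖P - F‖ ‖Q - F‖`.
-/

open scoped Nat

section Ultrametric

lemma IsUltrametricDist.norm_le_one_of_norm_sub_le_one {E : Type*} [SeminormedAddGroup E]
    [IsUltrametricDist E] {x y : E} (h : ‖x - y‖ ≤ 1) (hy : ‖y‖ ≤ 1) : ‖x‖ ≤ 1 :=
  sub_add_cancel x y ▸ (IsUltrametricDist.norm_add_le_max _ _).trans (max_le h hy)

variable {R : Type*} [NormedRing R] [IsUltrametricDist R]

lemma IsUltrametricDist.norm_mul_sub_mul_le {a b c d : R} {δ : ℝ} (hb : ‖b‖ ≤ 1) (hc : ‖c‖ ≤ 1)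
    (hac : ‖a - c‖ ≤ δ) (hbd : ‖b - d‖ ≤ δ) : ‖a * b - c * d‖ ≤ δ := by
  have hδ : 0 ≤ δ := (norm_nonneg _).trans hac
  calc ‖a * b - c * d‖ = ‖(a - c) * b + c * (b - d)‖ := by noncomm_ring
    _ ≤ max ‖(a - c) * b‖ ‖c * (b - d)‖ := IsUltrametricDist.norm_add_le_max _ _
    _ ≤ δ := max_le
      ((norm_mul_le _ _).trans (by nlinarith [norm_nonneg (a - c)]))
      ((norm_mul_le _ _).trans (by nlinarith [norm_nonneg c, norm_nonneg (b - d)]))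

lemma IsUltrametricDist.norm_mul_sub_one_le [NormOneClass R] {a b : R} {ε : ℝ} (hε : ε ≤ 1)
    (ha : ‖a - 1‖ ≤ ε) (hb : ‖b - 1‖ ≤ ε) : ‖a * b - 1‖ ≤ ε := by
  simpa using norm_mul_sub_mul_le (c := 1) (d := 1)
    (norm_le_one_of_norm_sub_le_one (hb.trans hε) norm_one.le) norm_one.le ha hb

lemma IsUltrametricDist.norm_prod_sub_one_le {R ι : Type*} [NormedCommRing R] [NormOneClass R]
    [IsUltrametricDist R] {s : Finset ι} {f : ι → R} {ε : ℝ} (hε₀ : 0 ≤ ε) (hε₁ : ε ≤ 1)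
    (h : ∀ i ∈ s, ‖f i - 1‖ ≤ ε) : ‖∏ i ∈ s, f i - 1‖ ≤ ε :=
  Finset.prod_induction f (fun x ↦ ‖x - 1‖ ≤ ε) (fun _ _ ↦ norm_mul_sub_one_le hε₁)
    (by simpa using hε₀) h

end Ultrametric

lemma two_mul_add_one_le_pow {p : ℕ} (hp : 3 ≤ p) (k : ℕ) : 2 * k + 1 ≤ p ^ k :=
  calc 2 * k + 1 = 1 + k * 2 := by ring
    _ ≤ 3 ^ k := one_add_le_pow_of_two_add_nonneg (by norm_num) k
    _ ≤ p ^ k := Nat.pow_le_pow_left hp k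

namespace Padic

variable {p : ℕ} [Fact p.Prime]

lemma norm_natCast_inv_le {m : ℕ} (hm : m ≠ 0) : ‖(m : ℚ_[p])‖⁻¹ ≤ m := by
  rw [norm_eq_zpow_neg_valuation (Nat.cast_ne_zero.2 hm), valuation_natCast, zpow_neg, inv_inv,
    zpow_natCast]
  exact_mod_cast Nat.le_of_dvd (Nat.pos_of_ne_zero hm) pow_padicValNat_dvd

lemma norm_div_natCast_le (x : ℚ_[p]) {m : ℕ} (hm : m ≠ 0) : ‖x / m‖ ≤ ‖x‖ * m := by
  rw [norm_div, div_eq_mul_inv]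
  exact mul_le_mul_of_nonneg_left (norm_natCast_inv_le hm) (norm_nonneg x)

lemma norm_two_eq_one (hp : p ≠ 2) : ‖(2 : ℚ_[p])‖ = 1 := by
  simpa using norm_natCast_eq_one_iff.2
    ((Nat.coprime_primes Fact.out Nat.prime_two).2 hp)

lemma norm_natCast_sub_pow {m n : ℕ} (hm₀ : m ≠ 0) (hm : m < p ^ n) :
    ‖(m : ℚ_[p]) - (p : ℚ_[p]) ^ n‖ = ‖(m : ℚ_[p])‖ := by
  have hlt : ‖(p : ℚ_[p]) ^ n‖ < ‖(m : ℚ_[p])‖ := by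
    rw [norm_p_pow, ← not_le]
    intro h
    have := Int.le_of_dvd (by omega) ((norm_int_le_pow_iff_dvd (m : ℤ) n).1 (by simpa using h))
    exact_mod_cast hm.not_ge (by exact_mod_cast this)
  rw [sub_eq_add_neg, add_eq_max_of_ne (by rw [norm_neg]; exact hlt.ne'), norm_neg,
    max_eq_left hlt.le]

lemma norm_pow_le_of_norm_lt_one {z : ℚ_[p]} (hz : ‖z‖ < 1) (k : ℕ) :
    ‖z ^ k‖ ≤ (p : ℝ) ^ (-k : ℤ) := by
  have hz' : ‖z‖ ≤ (p : ℝ)⁻¹ := by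
    simpa using (norm_lt_pow_iff_norm_le_pow_sub_one z 0).1 (by simpa using hz)
  rw [norm_pow, zpow_neg, zpow_natCast, ← inv_pow]
  exact pow_le_pow_left₀ (norm_nonneg z) hz' k

end Padic

lemma poch_eq_prod (q : ℚ) (k : ℕ) : poch q k = ∏ i ∈ range k, (q + i) := by
  induction k with
  | zero => simp [poch]
  | succ k ih => rw [poch, ascPochhammer_succ_eval, ← poch, ih, prod_range_succ]

lemma poch_one (k : ℕ) : poch 1 k = k ! := ascPochhammer_eval_one ℚ k

lemma poch_ne_zero_of_pos {q : ℚ} (hq : 0 < q) (k : ℕ) : poch q k ≠ 0 := by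
  rw [poch_eq_prod]
  exact prod_ne_zero_iff.2 fun i _ ↦ by positivity

lemma poch_neg_natCast_ne_zero {N k : ℕ} (hk : k ≤ N) : poch (-N) k ≠ 0 := by
  rw [poch_eq_prod]
  refine prod_ne_zero_iff.2 fun i hi ↦ ?_
  have : (i : ℚ) < N := by exact_mod_cast (mem_range.1 hi).trans_le hk
  linarith

def legendreCoef (k : ℕ) : ℚ := ((2 * k).choose k : ℚ) / 4 ^ k

lemma legendreCoef_mul_factorial (k : ℕ) : legendreCoef k * k ! = poch (1 / 2) k := by
  induction k with
  | zero => simp [legendreCoef, poch]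
  | succ k ih =>
    have hrec : ((k + 1 : ℕ) : ℚ) * (2 * (k + 1)).choose (k + 1) =
        2 * (2 * k + 1) * (2 * k).choose k := by
      exact_mod_cast Nat.succ_mul_centralBinom_succ k
    rw [poch, ascPochhammer_succ_eval, ← poch, ← ih, Nat.factorial_succ]
    simp only [legendreCoef]
    push_cast at hrec ⊢
    rw [pow_succ]
    field_simp
    linear_combination 2 * hrec

lemma norm_legendreCoef_le_one {p : ℕ} [Fact p.Prime] (hp : p ≠ 2) (k : ℕ) :
    ‖(legendreCoef k : ℚ_[p])‖ ≤ 1 := by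
  have h4 : ‖(4 : ℚ_[p])‖ = 1 := by
    rw [show (4 : ℚ_[p]) = 2 * 2 by norm_num, norm_mul, Padic.norm_two_eq_one hp, one_mul]
  simpa [legendreCoef, h4] using Padic.norm_int_le_one (p := p) ((2 * k).choose k)

lemma hypergeomCoef_eq (a s b : ℚ) (k : ℕ) (hb : poch b k ≠ 0) :
    poch a k * poch s k / (poch b k * k !) = legendreCoef k ^ 2 *
      (poch a k / poch (1 / 2) k * (poch s k / poch (1 / 2) k) * (poch 1 k / poch b k)) := by
  have hk : (k ! : ℚ) ≠ 0 := by positivity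
  have hhalf := poch_ne_zero_of_pos (one_half_pos (α := ℚ)) k
  rw [← legendreCoef_mul_factorial, poch_one] at *
  have hc : legendreCoef k ≠ 0 := left_ne_zero_of_mul hhalf
  field_simp

lemma legendreCoef_cast {K : Type*} [DivisionRing K] [CharZero K] (k : ℕ) :
    ((legendreCoef k : ℚ) : K) = ((2 * k).choose k : K) / 4 ^ k := by
  simp [legendreCoef]

lemma aeval_Ppoly {A : Type*} [DivisionRing A] [CharZero A] (z : A) (N : ℕ) :
    aeval z (Ppoly N) = ∑ k ∈ range (N / 2 + 1), (Pcoef N k : A) * z ^ k := by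
  simp [Ppoly, map_sum]

lemma aeval_Qpoly {A : Type*} [DivisionRing A] [CharZero A] (z : A) (N : ℕ) :
    aeval z (Qpoly N) = ∑ k ∈ range (N / 2 + 1), (Qcoef N k : A) * z ^ k := by
  simp [Qpoly, map_sum]

section PadicEstimates

variable {p : ℕ} [Fact p.Prime]

lemma zpow_neg_mul_le_one {m n : ℕ} (h : m ≤ p ^ n) : (p : ℝ) ^ (-n : ℤ) * m ≤ 1 := by
  have hpn : (0 : ℝ) < (p : ℝ) ^ n := pow_pos (Nat.cast_pos.2 (Fact.out : p.Prime).pos) n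
  rw [zpow_neg, zpow_natCast, inv_mul_le_iff₀ hpn, mul_one]
  exact_mod_cast h

lemma norm_poch_div_poch_sub_one_le {a b : ℚ} {k : ℕ} {ε : ℝ} (hε₀ : 0 ≤ ε) (hε₁ : ε ≤ 1)
    (h : ∀ i < k, ‖(((a + i) / (b + i) : ℚ) : ℚ_[p]) - 1‖ ≤ ε) :
    ‖((poch a k / poch b k : ℚ) : ℚ_[p]) - 1‖ ≤ ε := by
  rw [poch_eq_prod, poch_eq_prod, ← prod_div_distrib, Rat.cast_prod]
  exact IsUltrametricDist.norm_prod_sub_one_le hε₀ hε₁ fun i hi ↦ h i (mem_range.1 hi)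

lemma norm_poch_div_poch_half_sub_one_le {a : ℚ} {n k : ℕ} (c : ℤ)
    (ha : 2 * a - 1 = c * p ^ n) (hk : 2 * k ≤ p ^ n) :
    ‖((poch a k / poch (1 / 2) k : ℚ) : ℚ_[p]) - 1‖ ≤ (p : ℝ) ^ (-n : ℤ) * (2 * k) := by
  refine norm_poch_div_poch_sub_one_le (by positivity) (by exact_mod_cast zpow_neg_mul_le_one hk)
    fun i hi ↦ ?_
  have hfac : (a + i) / (1 / 2 + i) - 1 = c * p ^ n / ((2 * i + 1 : ℕ) : ℚ) := by
    rw [div_sub_one (by positivity), div_eq_div_iff (by positivity) (by positivity)]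
    push_cast
    linear_combination (1 / 2 + (i : ℚ)) * ha
  calc ‖(((a + i) / (1 / 2 + i) : ℚ) : ℚ_[p]) - 1‖
      = ‖(((a + i) / (1 / 2 + i) - 1 : ℚ) : ℚ_[p])‖ := by rw [Rat.cast_sub, Rat.cast_one]
    _ = ‖(c : ℚ_[p]) * (p : ℚ_[p]) ^ n / ((2 * i + 1 : ℕ) : ℚ_[p])‖ := by rw [hfac]; push_cast; rfl
    _ ≤ ‖(c : ℚ_[p]) * (p : ℚ_[p]) ^ n‖ * (2 * i + 1 : ℕ) := Padic.norm_div_natCast_le _ (by omega)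
    _ = ‖(c : ℚ_[p])‖ * ((p : ℝ) ^ (-n : ℤ) * (2 * i + 1 : ℕ)) := by
        rw [norm_mul, Padic.norm_p_pow, mul_assoc]
    _ ≤ 1 * ((p : ℝ) ^ (-n : ℤ) * (2 * k)) := by
        gcongr
        · exact Padic.norm_int_le_one c
        · exact_mod_cast (by omega : 2 * i + 1 ≤ 2 * k)
    _ = (p : ℝ) ^ (-n : ℤ) * (2 * k) := one_mul _

lemma norm_poch_one_div_poch_sub_one_le {N n k : ℕ} (hN : N + 1 = p ^ n) (hk : 2 * k ≤ p ^ n) :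
    ‖((poch 1 k / poch (-N) k : ℚ) : ℚ_[p]) - 1‖ ≤ (p : ℝ) ^ (-n : ℤ) * (2 * k) := by
  refine norm_poch_div_poch_sub_one_le (by positivity) (by exact_mod_cast zpow_neg_mul_le_one hk)
    fun i hi ↦ ?_
  have hi' : i + 1 < p ^ n := by omega
  have hnorm := Padic.norm_natCast_sub_pow (p := p) (Nat.succ_ne_zero i) hi'
  have hden : ((i + 1 : ℕ) : ℚ_[p]) - (p : ℚ_[p]) ^ n ≠ 0 := by
    rw [← norm_ne_zero_iff, hnorm]
    exact norm_ne_zero_iff.2 (Nat.cast_ne_zero.2 (Nat.succ_ne_zero i))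
  have hfac : (((1 + i) / (-N + i) : ℚ) : ℚ_[p]) - 1 =
      (p : ℚ_[p]) ^ n / (((i + 1 : ℕ) : ℚ_[p]) - (p : ℚ_[p]) ^ n) := by
    have hN' : (N : ℚ_[p]) = (p : ℚ_[p]) ^ n - 1 := by
      rw [eq_sub_iff_add_eq]; exact_mod_cast hN
    have e : -(N : ℚ_[p]) + i = ((i + 1 : ℕ) : ℚ_[p]) - (p : ℚ_[p]) ^ n := by
      rw [hN']; push_cast; ring
    push_cast
    rw [e, div_sub_one hden]
    push_cast
    ring
  calc ‖(((1 + i) / (-N + i) : ℚ) : ℚ_[p]) - 1‖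
      = ‖(p : ℚ_[p]) ^ n / ((i + 1 : ℕ) : ℚ_[p])‖ := by rw [hfac, norm_div, norm_div, hnorm]
    _ ≤ ‖(p : ℚ_[p]) ^ n‖ * (i + 1 : ℕ) := Padic.norm_div_natCast_le _ (Nat.succ_ne_zero i)
    _ ≤ (p : ℝ) ^ (-n : ℤ) * (2 * k) := by
        rw [Padic.norm_p_pow]
        gcongr
        push_cast
        have : (i : ℝ) + 1 ≤ k := by exact_mod_cast hi
        linarith

lemma norm_hypergeomCoef_sub_legendreCoef_sq_le (hp : p ≠ 2) {a s : ℚ} {N n k : ℕ}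
    (hN : N + 1 = p ^ n) (hk : 2 * k ≤ p ^ n) (ca cs : ℤ) (ha : 2 * a - 1 = ca * p ^ n)
    (hs : 2 * s - 1 = cs * p ^ n) :
    ‖((poch a k * poch s k / (poch (-N) k * k !) : ℚ) : ℚ_[p]) - (legendreCoef k : ℚ_[p]) ^ 2‖
      ≤ (p : ℝ) ^ (-n : ℤ) * (2 * k) := by
  have hε : (p : ℝ) ^ (-n : ℤ) * (2 * k) ≤ 1 := by exact_mod_cast zpow_neg_mul_le_one hk
  have hratio := IsUltrametricDist.norm_mul_sub_one_le hε
    (IsUltrametricDist.norm_mul_sub_one_le hε (norm_poch_div_poch_half_sub_one_le ca ha hk)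
      (norm_poch_div_poch_half_sub_one_le cs hs hk))
    (norm_poch_one_div_poch_sub_one_le hN hk)
  rw [hypergeomCoef_eq a s _ k (poch_neg_natCast_ne_zero (by omega)), Rat.cast_mul, Rat.cast_pow,
    ← mul_sub_one, norm_mul, norm_pow]
  push_cast at hratio ⊢
  calc ‖(legendreCoef k : ℚ_[p])‖ ^ 2 * ‖_‖ ≤ 1 ^ 2 * ((p : ℝ) ^ (-n : ℤ) * (2 * k)) := by
        gcongr
        exact norm_legendreCoef_le_one hp k
    _ = (p : ℝ) ^ (-n : ℤ) * (2 * k) := by rw [one_pow, one_mul]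

lemma norm_Pcoef_sub_legendreCoef_sq_le (hp : p ≠ 2) {N n k : ℕ} (hN : N + 1 = p ^ n)
    (hk : 2 * k ≤ p ^ n) :
    ‖(Pcoef N k : ℚ_[p]) - (legendreCoef k : ℚ_[p]) ^ 2‖ ≤ (p : ℝ) ^ (-n : ℤ) * (2 * k) := by
  have hN' : (N : ℚ) + 1 = p ^ n := by exact_mod_cast hN
  exact norm_hypergeomCoef_sub_legendreCoef_sq_le hp hN hk (-1) 1
    (by push_cast; linear_combination -hN') (by push_cast; linear_combination hN')

lemma norm_Qcoef_sub_legendreCoef_sq_le (hp : p ≠ 2) {N n k : ℕ} (hN : N + 1 = p ^ n)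
    (hk : 2 * k ≤ p ^ n) :
    ‖(Qcoef N k : ℚ_[p]) - (legendreCoef k : ℚ_[p]) ^ 2‖ ≤ (p : ℝ) ^ (-n : ℤ) * (2 * k) := by
  have hN' : (N : ℚ) + 1 = p ^ n := by exact_mod_cast hN
  exact norm_hypergeomCoef_sub_legendreCoef_sq_le hp hN hk (-1) (-3)
    (by push_cast; linear_combination -hN') (by push_cast; linear_combination -3 * hN')

lemma norm_legendreCoef_sq_mul_pow_le (hp : p ≠ 2) (z : ℚ_[p]) (k : ℕ) :
    ‖(legendreCoef k : ℚ_[p]) ^ 2 * z ^ k‖ ≤ ‖z ^ k‖ := by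
  rw [norm_mul, norm_pow]
  exact mul_le_of_le_one_left (norm_nonneg _)
    (pow_le_one₀ (norm_nonneg _) (norm_legendreCoef_le_one hp k))

lemma summable_legendreCoef_sq_mul_pow (hp : p ≠ 2) {z : ℚ_[p]} (hz : ‖z‖ < 1) :
    Summable fun k ↦ (legendreCoef k : ℚ_[p]) ^ 2 * z ^ k :=
  .of_norm_bounded (summable_geometric_of_lt_one (norm_nonneg z) hz) fun k ↦
    (norm_legendreCoef_sq_mul_pow_le hp z k).trans (norm_pow z k).le

lemma Fpadic_eq_tsum (z : ℚ_[p]) :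
    Fpadic p z = ∑' k, (legendreCoef k : ℚ_[p]) ^ 2 * z ^ k := by
  simp only [Fpadic, legendreCoef_cast]

lemma norm_Fpadic_le_one (hp : p ≠ 2) {z : ℚ_[p]} (hz : ‖z‖ < 1) : ‖Fpadic p z‖ ≤ 1 := by
  rw [Fpadic_eq_tsum]
  refine IsUltrametricDist.norm_tsum_le_of_forall_le_of_nonneg zero_le_one fun k ↦ ?_
  exact (norm_legendreCoef_sq_mul_pow_le hp z k).trans
    (by rw [norm_pow]; exact pow_le_one₀ (norm_nonneg z) hz.le)

lemma norm_sum_sub_Fpadic_le (hp : p ≠ 2) {z : ℚ_[p]} (hz : ‖z‖ < 1) {n M : ℕ}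
    (hnM : n ≤ M + 1) (g : ℕ → ℚ)
    (hg : ∀ k ≤ M, ‖(g k : ℚ_[p]) - (legendreCoef k : ℚ_[p]) ^ 2‖ ≤ (p : ℝ) ^ (-n : ℤ) * (2 * k)) :
    ‖∑ k ∈ range (M + 1), (g k : ℚ_[p]) * z ^ k - Fpadic p z‖ ≤ (p : ℝ) ^ (-n : ℤ) := by
  have hp3 : 3 ≤ p := by have := (Fact.out : p.Prime).two_le; omega
  set f : ℕ → ℚ_[p] := fun k ↦ (legendreCoef k : ℚ_[p]) ^ 2 * z ^ k
  have hhead : ‖∑ k ∈ range (M + 1), ((g k : ℚ_[p]) * z ^ k - f k)‖ ≤ (p : ℝ) ^ (-n : ℤ) := by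
    refine IsUltrametricDist.norm_sum_le_of_forall_le_of_nonneg (by positivity) fun k hk ↦ ?_
    have h2k : (p : ℝ) ^ (-k : ℤ) * (2 * k) ≤ 1 := by
      exact_mod_cast zpow_neg_mul_le_one (by have := two_mul_add_one_le_pow hp3 k; omega)
    calc ‖(g k : ℚ_[p]) * z ^ k - f k‖
        = ‖(g k : ℚ_[p]) - (legendreCoef k : ℚ_[p]) ^ 2‖ * ‖z ^ k‖ := by rw [← sub_mul, norm_mul]
      _ ≤ (p : ℝ) ^ (-n : ℤ) * (2 * k) * (p : ℝ) ^ (-k : ℤ) :=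
        mul_le_mul (hg k (Nat.lt_succ_iff.1 (mem_range.1 hk)))
          (Padic.norm_pow_le_of_norm_lt_one hz k) (norm_nonneg _) (by positivity)
      _ = (p : ℝ) ^ (-n : ℤ) * ((p : ℝ) ^ (-k : ℤ) * (2 * k)) := by ring
      _ ≤ (p : ℝ) ^ (-n : ℤ) := mul_le_of_le_one_right (by positivity) h2k
  have htail : ‖∑' i, f (i + (M + 1))‖ ≤ (p : ℝ) ^ (-n : ℤ) := by
    refine IsUltrametricDist.norm_tsum_le_of_forall_le_of_nonneg (by positivity) fun i ↦ ?_
    refine (norm_legendreCoef_sq_mul_pow_le hp z _).trans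
      ((Padic.norm_pow_le_of_norm_lt_one hz _).trans (zpow_le_zpow_right₀ ?_ (by omega)))
    exact_mod_cast (Fact.out : p.Prime).one_le
  have hsplit : Fpadic p z = ∑ k ∈ range (M + 1), f k + ∑' i, f (i + (M + 1)) := by
    rw [Fpadic_eq_tsum, (summable_legendreCoef_sq_mul_pow hp hz).sum_add_tsum_nat_add]
  rw [hsplit, ← sub_sub, ← sum_sub_distrib, sub_eq_add_neg]
  exact (IsUltrametricDist.norm_add_le_max _ _).trans (max_le hhead (by rwa [norm_neg]))

lemma norm_aeval_Ppoly_mul_Qpoly_sub_Fpadic_sq_le (hp : p ≠ 2) {z : ℚ_[p]} (hz : ‖z‖ < 1)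
    (n : ℕ) :
    ‖aeval z (Ppoly (p ^ n - 1) * Qpoly (p ^ n - 1)) - Fpadic p z ^ 2‖ ≤ (p : ℝ) ^ (-n : ℤ) := by
  have hp3 : 3 ≤ p := by have := (Fact.out : p.Prime).two_le; omega
  obtain ⟨M, hM⟩ : ∃ M, p ^ n = 2 * M + 1 := ((Fact.out : p.Prime).odd_of_ne_two hp).pow
  have hN : p ^ n - 1 + 1 = p ^ n := by omega
  have hNM : (p ^ n - 1) / 2 = M := by omega
  have hnM : n ≤ M + 1 := by have := two_mul_add_one_le_pow hp3 n; omega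
  have hP := norm_sum_sub_Fpadic_le hp hz hnM _
    fun k hk ↦ norm_Pcoef_sub_legendreCoef_sq_le hp hN (k := k) (by omega)
  have hQ := norm_sum_sub_Fpadic_le hp hz hnM _
    fun k hk ↦ norm_Qcoef_sub_legendreCoef_sq_le hp hN (k := k) (by omega)
  rw [← hNM, ← aeval_Ppoly] at hP
  rw [← hNM, ← aeval_Qpoly] at hQ
  have hF := norm_Fpadic_le_one hp hz
  have hδ : (p : ℝ) ^ (-n : ℤ) ≤ 1 :=
    zpow_le_one_of_nonpos₀ (by exact_mod_cast (Fact.out : p.Prime).one_le) (by omega)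
  rw [map_mul, sq]
  exact IsUltrametricDist.norm_mul_sub_mul_le
    (IsUltrametricDist.norm_le_one_of_norm_sub_le_one (hQ.trans hδ) hF) hF hP hQ

end PadicEstimates

theorem stmt19 (p : ℕ) [Fact p.Prime] (hodd : p ≠ 2) (z : ℚ_[p]) (hz : ‖z‖ < 1) :
    Summable (fun k : ℕ => (((2 * k).choose k : ℚ_[p]) / 4 ^ k) ^ 2 * z ^ k) ∧
    (∀ n : ℕ, 1 ≤ n →
      ‖Polynomial.aeval z (Ppoly (p ^ n - 1) * Qpoly (p ^ n - 1)) - (Fpadic p z) ^ 2‖ ≤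
        (p : ℝ) ^ (-(n : ℤ))) ∧
    Filter.Tendsto (fun n : ℕ => Polynomial.aeval z (Ppoly (p ^ n - 1) * Qpoly (p ^ n - 1)))
      Filter.atTop (nhds ((Fpadic p z) ^ 2)) := by
  have hbound := norm_aeval_Ppoly_mul_Qpoly_sub_Fpadic_sq_le hodd hz
  refine ⟨?_, fun n _ ↦ hbound n, ?_⟩
  · simpa only [legendreCoef_cast] using summable_legendreCoef_sq_mul_pow hodd hz
  · refine tendsto_iff_norm_sub_tendsto_zero.2 (squeeze_zero (fun _ ↦ norm_nonneg _) hbound ?_)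
    simp_rw [zpow_neg, zpow_natCast, ← inv_pow]
    exact tendsto_pow_atTop_nhds_zero_of_lt_one (by positivity)
      (inv_lt_one_of_one_lt₀ (by exact_mod_cast (Fact.out : p.Prime).one_lt))
end
end
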